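/- Let H be Hermitian, L an H-invariant subspace, and Z a matrix with range(Z) ⊆ L ⊆ ker(Z). Then for every θ, the matrix M(θ) = H − 2Re(e^{−2iθ}Z) is unitarily similar to M(0) = H − 2Re(Z); in particular the eigenvalues of M(θ) do not depend on θ. -/

import Mathlib

/-!
Let `P` be the orthogonal projection onto `L`. Since `L` is invariant under the Hermitian `H`,
`P` commutes with `H`, and `range Z ⊆ L ⊆ ker Z` gives `P Z = Z` and `Z P = 0`. Hence the unitary
`U = P + e^{2iθ} (1 - P)` fixes `H` and sends `Z` to `e^{-2iθ} Z` under `X ↦ U X U*`, so that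
`U M(0) U* = M(θ)`.
-/

open Matrix

/-- The "real part" of a square complex matrix: `Re X = (X + X*)/2`. -/
noncomputable def rePart {ι : Type*} [Fintype ι] [DecidableEq ι] (X : Matrix ι ι ℂ) : Matrix ι ι ℂ :=
  (2 : ℂ)⁻¹ • (X + Xᴴ)

section StarAlgebra

variable {R A : Type*} [CommRing R] [StarRing R] [Ring A] [StarRing A] [Algebra R A]
  [StarModule R A] {p : A}

theorem IsStarProjection.add_smul_one_sub_mem_unitary (hp : IsStarProjection p) {c : R}
    (hc : c ∈ unitary R) : p + c • (1 - p) ∈ unitary A := by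
  have hq := hp.one_sub
  rw [Unitary.mem_iff, star_add, star_smul, hp.isSelfAdjoint.star_eq, hq.isSelfAdjoint.star_eq]
  constructor <;>
  simp only [add_mul, mul_add, smul_mul_assoc, mul_smul_comm, smul_smul, hp.isIdempotentElem.eq,
    hq.isIdempotentElem.eq, hp.mul_one_sub_self, hp.one_sub_mul_self, smul_zero, add_zero,
    zero_add, Unitary.star_mul_self_of_mem hc, Unitary.mul_star_self_of_mem hc, one_smul,
    add_sub_cancel]

theorem IsStarProjection.add_smul_one_sub_mul_mul_star (hp : IsStarProjection p) (c : R) {z : A}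
    (hpz : p * z = z) (hzp : z * p = 0) :
    (p + c • (1 - p)) * z * star (p + c • (1 - p)) = star c • z := by
  rw [star_add, star_smul, hp.isSelfAdjoint.star_eq, hp.one_sub.isSelfAdjoint.star_eq]
  simp only [add_mul, mul_add, smul_mul_assoc, mul_smul_comm, sub_mul, mul_sub, one_mul, mul_one,
    hpz, hzp, sub_self, smul_zero, zero_add, add_zero, sub_zero]

theorem IsStarProjection.commute_of_mul_mul_eq_mul {h : A} (hp : IsStarProjection p)
    (hh : IsSelfAdjoint h) (hinv : p * h * p = h * p) : Commute p h := by
  have hstar : p * h * p = p * h := by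
    simpa [mul_assoc, hp.isSelfAdjoint.star_eq, hh.star_eq] using congr(star $hinv)
  exact hstar.symm.trans hinv

end StarAlgebra

namespace Matrix

variable {ι R : Type*} [Fintype ι]

theorem mul_eq_zero_of_mulVec_mem [CommSemiring R] {S : Set (ι → R)} {A B : Matrix ι ι R}
    (hB : ∀ x, B *ᵥ x ∈ S) (hA : ∀ x ∈ S, A *ᵥ x = 0) :
    A * B = 0 :=
  ext_iff_mulVec.2 fun x => by rw [← mulVec_mulVec, hA _ (hB x), zero_mulVec]

theorem mul_eq_right_of_mulVec_mem [CommSemiring R] {S : Set (ι → R)} {A B : Matrix ι ι R}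
    (hB : ∀ x, B *ᵥ x ∈ S) (hA : ∀ x ∈ S, A *ᵥ x = x) :
    A * B = B :=
  ext_iff_mulVec.2 fun x => by rw [← mulVec_mulVec, hA _ (hB x)]

theorem charpoly_unitary_conj [DecidableEq ι] [CommRing R] [StarRing R] (U : unitaryGroup ι R)
    (A : Matrix ι ι R) :
    ((U : Matrix ι ι R) * A * star (U : Matrix ι ι R)).charpoly = A.charpoly := by
  rw [charpoly_mul_comm, ← mul_assoc, Unitary.coe_star_mul_self, one_mul]

theorem mul_rePart_mul_conjTranspose [DecidableEq ι] (U X : Matrix ι ι ℂ) :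
    U * rePart X * Uᴴ = rePart (U * X * Uᴴ) := by
  simp only [rePart, Matrix.mul_smul, smul_mul, mul_add, add_mul, conjTranspose_mul,
    conjTranspose_conjTranspose, mul_assoc]

end Matrix

namespace Submodule

variable {𝕜 ι : Type*} [RCLike 𝕜] [Fintype ι] [DecidableEq ι] (L : Submodule 𝕜 (ι → 𝕜))

noncomputable def starProjectionMatrix : Matrix ι ι 𝕜 :=
  (toEuclideanCLM (n := ι) (𝕜 := 𝕜)).symm
    (L.comap (WithLp.linearEquiv 2 𝕜 (ι → 𝕜)).toLinearMap).starProjection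

theorem isStarProjection_starProjectionMatrix : IsStarProjection L.starProjectionMatrix :=
  isStarProjection_starProjection.map (toEuclideanCLM (n := ι) (𝕜 := 𝕜)).symm

theorem starProjectionMatrix_mulVec (x : ι → 𝕜) :
    L.starProjectionMatrix *ᵥ x = WithLp.ofLp
      ((L.comap (WithLp.linearEquiv 2 𝕜 (ι → 𝕜)).toLinearMap).starProjection
        (WithLp.toLp 2 x)) := by
  rw [← ofLp_toEuclideanCLM, starProjectionMatrix, StarAlgEquiv.apply_symm_apply]

theorem starProjectionMatrix_mulVec_mem (x : ι → 𝕜) : L.starProjectionMatrix *ᵥ x ∈ L := by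
  rw [starProjectionMatrix_mulVec]
  exact starProjection_apply_mem (L.comap (WithLp.linearEquiv 2 𝕜 (ι → 𝕜)).toLinearMap) _

theorem starProjectionMatrix_mulVec_of_mem {x : ι → 𝕜} (hx : x ∈ L) :
    L.starProjectionMatrix *ᵥ x = x := by
  rw [starProjectionMatrix_mulVec, starProjection_eq_self_iff.2 hx]

end Submodule

theorem Mtheta_unitarily_similar_of_nilpotent_structure
    {n : ℕ} (H Z : Matrix (Fin n) (Fin n) ℂ) (hH : Hᴴ = H)
    (L : Submodule ℂ (Fin n → ℂ))
    (hinv : ∀ x ∈ L, H.mulVec x ∈ L)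
    (hrange : ∀ x : Fin n → ℂ, Z.mulVec x ∈ L)
    (hker : ∀ x ∈ L, Z.mulVec x = 0)
    (M : ℝ → Matrix (Fin n) (Fin n) ℂ)
    (hM : ∀ θ : ℝ, M θ = H - (2 : ℂ) • rePart (Complex.exp (-(2 * θ : ℂ) * Complex.I) • Z)) :
    ∀ θ : ℝ,
      (∃ U : Matrix.unitaryGroup (Fin n) ℂ,
        M θ = (U : Matrix (Fin n) (Fin n) ℂ) * M 0 * star (U : Matrix (Fin n) (Fin n) ℂ)) ∧
      (M θ).charpoly = (M 0).charpoly := by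
  intro θ
  set P := L.starProjectionMatrix
  have hP : IsStarProjection P := L.isStarProjection_starProjectionMatrix
  have hPL : ∀ x, P *ᵥ x ∈ L := L.starProjectionMatrix_mulVec_mem
  have hPfix : ∀ x ∈ L, P *ᵥ x = x := fun _ => L.starProjectionMatrix_mulVec_of_mem
  have hPH : Commute P H := hP.commute_of_mul_mul_eq_mul hH <| by
    rw [mul_assoc]
    exact mul_eq_right_of_mulVec_mem (fun x => by rw [← mulVec_mulVec]; exact hinv _ (hPL x)) hPfix
  set e := Complex.exp (-(2 * θ : ℂ) * Complex.I)
  have he : e ∈ unitary ℂ := by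
    rw [Unitary.mem_iff_star_mul_self, Complex.star_def, ← Complex.exp_conj, ← Complex.exp_add]
    simp [map_ofNat]
  set U := P + star e • (1 - P)
  have hU : U ∈ unitaryGroup (Fin n) ℂ := hP.add_smul_one_sub_mem_unitary (Unitary.star_mem he)
  have hUH : U * H * star U = H := (commute_unitary_iff_star_right_conjugate hU).1 <|
    hPH.add_left (((Commute.one_left H).sub_left hPH).smul_left (star e))
  have hUZ : U * Z * star U = e • Z := by
    simpa only [star_star] using hP.add_smul_one_sub_mul_mul_star (star e)
      (mul_eq_right_of_mulVec_mem hrange hPfix) (mul_eq_zero_of_mulVec_mem hPL hker)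
  have hM0 : M 0 = H - (2 : ℂ) • rePart Z := by simpa using hM 0
  have hconj : M θ = U * M 0 * star U := by
    rw [hM θ, hM0, mul_sub, sub_mul, hUH, Matrix.mul_smul, Matrix.smul_mul, star_eq_conjTranspose,
      mul_rePart_mul_conjTranspose, ← star_eq_conjTranspose, hUZ]
  exact ⟨⟨⟨U, hU⟩, hconj⟩, hconj ▸ charpoly_unitary_conj ⟨U, hU⟩ (M 0)⟩
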